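/- arXiv:2411.15012 — 3 statements merged into one kernel-verified Lean document; each statement's English description precedes it below -/
import Mathlib

section
/- Quantitative Lusin theorem: Let μ be a Radon measure on ℝⁿ, Ω ⊆ ℝⁿ open with μ(Ω) < ∞, and f : Ω → ℝⁿ Borel. For every ε > 0 there exists a continuous function h : Ω → ℝⁿ with compact support in Ω such that μ({x ∈ Ω : h(x) ≠ f(x)}) < ε and ‖h‖_{L^p(μ)} ≤ (1+ε)·‖f‖_{L^p(μ)} for every p ∈ [1, ∞] simultaneously (with one single h independent of p). -/
/-!
Lusin's theorem gives a compact `K ⊆ Ω` carrying all but `ε` of the mass of `μ|Ω` on which `f` is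
continuous and bounded by `(1 + ε) c`, where the level `c` lies below the essential supremum of
`‖f‖` and `‖f‖ ≤ (1 + ε) c` off a set of small measure. Extending `f|K` by Tietze into the ball of
radius `(1 + ε) c` and cutting off by an Urysohn function supported in a neighbourhood `U ⊆ Ω` of
`K` gives `h = f` on `K` with `‖h‖ ≤ (1 + ε) c`. The `L^∞` bound is then immediate, while for
`p < ∞`
  `∫ ‖h‖^p ≤ ∫ ‖f‖^p + ((1 + ε) c)^p μ(U \ K)`.
Choosing `(1 + ε) μ(U \ K) ≤ ε μ{‖f‖ ≥ c}` and using Chebyshev, `c^p μ{‖f‖ ≥ c} ≤ ∫ ‖f‖^p`, the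
error term is at most `(1 + ε)^(p-1) ε ∫ ‖f‖^p`, whence `∫ ‖h‖^p ≤ (1 + ε)^p ∫ ‖f‖^p` for every
`p ≥ 1` at once.
-/

open MeasureTheory Set ENNReal TopologicalSpace Filter Topology

theorem ENNReal.add_rpow_mul_le {a A c e m : ℝ≥0∞} {q : ℝ} (hq : 1 ≤ q) (hA : c ^ q * A ≤ a)
    (hm : (1 + e) * m ≤ e * A) : a + ((1 + e) * c) ^ q * m ≤ (1 + e) ^ q * a := by
  have hsplit : (1 + e) ^ q = (1 + e) ^ (q - 1) * (1 + e) := by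
    conv_lhs => rw [← sub_add_cancel q 1]
    rw [ENNReal.rpow_add_of_nonneg _ _ (by linarith) zero_le_one, ENNReal.rpow_one]
  have hone : 1 ≤ (1 + e) ^ (q - 1) := by
    simpa using ENNReal.rpow_le_rpow_of_exponent_le le_self_add (sub_nonneg.2 hq)
  calc a + ((1 + e) * c) ^ q * m = a + (1 + e) ^ (q - 1) * c ^ q * ((1 + e) * m) := by
        rw [ENNReal.mul_rpow_of_nonneg _ _ (by linarith), hsplit]; ring
    _ ≤ (1 + e) ^ (q - 1) * a + (1 + e) ^ (q - 1) * c ^ q * (e * A) :=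
        add_le_add (le_mul_of_one_le_left' hone) (by gcongr)
    _ = (1 + e) ^ (q - 1) * a + (1 + e) ^ (q - 1) * e * (c ^ q * A) := by ring
    _ ≤ (1 + e) ^ (q - 1) * a + (1 + e) ^ (q - 1) * e * a := by gcongr
    _ = (1 + e) ^ q * a := by rw [hsplit]; ring

section Lusin

variable {X Y : Type*} [TopologicalSpace X] [MeasurableSpace X] [OpensMeasurableSpace X]
  {μ : Measure X}

theorem MeasurableSet.exists_isClosed_isOpen_sdiff_lt [μ.WeaklyRegular] {s : Set X}
    (hs : MeasurableSet s) (hμs : μ s ≠ ∞) {ε : ℝ≥0∞} (hε : ε ≠ 0) :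
    ∃ F U, F ⊆ s ∧ s ⊆ U ∧ IsClosed F ∧ IsOpen U ∧ μ (U \ F) < ε := by
  obtain ⟨F, hFs, hF, hsF⟩ := hs.exists_isClosed_sdiff_lt hμs (ENNReal.half_pos hε).ne'
  obtain ⟨U, hsU, hU, -, hUs⟩ := hs.exists_isOpen_sdiff_lt hμs (ENNReal.half_pos hε).ne'
  refine ⟨F, U, hFs, hsU, hF, hU, ?_⟩
  calc μ (U \ F) ≤ μ (U \ s) + μ (s \ F) :=
        (measure_mono (sdiff_triangle U s F)).trans (measure_union_le _ _)
    _ < ε / 2 + ε / 2 := ENNReal.add_lt_add hUs hsF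
    _ = ε := ENNReal.add_halves ε

variable (μ) in
theorem Measurable.exists_isClosed_continuousOn_measure_compl_lt [TopologicalSpace Y]
    [MeasurableSpace Y] [OpensMeasurableSpace Y] [SecondCountableTopology Y]
    [IsFiniteMeasure μ] [μ.WeaklyRegular] {f : X → Y} (hf : Measurable f)
    {δ : ℝ≥0∞} (hδ : δ ≠ 0) :
    ∃ F, IsClosed F ∧ ContinuousOn f F ∧ μ Fᶜ < δ := by
  have hB := isBasis_countableBasis Y
  have : Countable (countableBasis Y) := (countable_countableBasis Y).to_subtype
  obtain ⟨η, hη, hηδ⟩ := ENNReal.exists_pos_sum_of_countable' hδ (countableBasis Y)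
  choose F U hFV hVU hF hU hUF using fun V : countableBasis Y ↦
    (hf (hB.isOpen V.2).measurableSet).exists_isClosed_isOpen_sdiff_lt (measure_ne_top μ _)
      (hη V).ne'
  -- on `⋂ V, F V ∪ (U V)ᶜ` the preimage of a basic open set `V` is cut out by the open set `U V`
  refine ⟨⋂ V, F V ∪ (U V)ᶜ, isClosed_iInter fun V ↦ (hF V).union (hU V).isClosed_compl, ?_, ?_⟩
  · refine hB.continuousOn_iff.2 fun V hV ↦ ⟨U ⟨V, hV⟩, hU _, ?_⟩
    ext x
    simp only [mem_inter_iff, mem_preimage, mem_iInter]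
    refine ⟨fun ⟨hx, hxF⟩ ↦ ⟨hVU _ hx, hxF⟩, fun ⟨hx, hxF⟩ ↦ ⟨?_, hxF⟩⟩
    exact hFV _ ((hxF ⟨V, hV⟩).resolve_right (not_not_intro hx))
  · calc μ (⋂ V, F V ∪ (U V)ᶜ)ᶜ = μ (⋃ V, U V \ F V) := by
          simp only [compl_iInter, compl_union, compl_compl, sdiff_eq, inter_comm]
      _ ≤ ∑' V, μ (U V \ F V) := measure_iUnion_le _
      _ ≤ ∑' V, η V := ENNReal.tsum_le_tsum fun V ↦ (hUF V).le
      _ < δ := hηδ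

variable (μ) in
theorem Measurable.exists_isCompact_subset_continuousOn_measure_sdiff_lt [T2Space X]
    [TopologicalSpace Y] [MeasurableSpace Y] [OpensMeasurableSpace Y] [SecondCountableTopology Y]
    [IsFiniteMeasure μ] [μ.WeaklyRegular] [μ.InnerRegularCompactLTTop] {f : X → Y}
    (hf : Measurable f) {s : Set X} (hs : MeasurableSet s) {δ : ℝ≥0∞} (hδ : δ ≠ 0) :
    ∃ K ⊆ s, IsCompact K ∧ ContinuousOn f K ∧ μ (s \ K) < δ := by
  obtain ⟨F, hF, hfF, hFδ⟩ :=
    hf.exists_isClosed_continuousOn_measure_compl_lt μ (ENNReal.half_pos hδ).ne'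
  obtain ⟨K, hKsF, hK, hsFK⟩ := (hs.inter hF.measurableSet).exists_isCompact_sdiff_lt
    (measure_ne_top μ _) (ENNReal.half_pos hδ).ne'
  refine ⟨K, hKsF.trans inter_subset_left, hK, hfF.mono (hKsF.trans inter_subset_right), ?_⟩
  calc μ (s \ K) ≤ μ Fᶜ + μ ((s ∩ F) \ K) := by
        refine (measure_mono fun x (hx : x ∈ s \ K) ↦ ?_).trans (measure_union_le _ _)
        by_cases hxF : x ∈ F
        exacts [Or.inr ⟨⟨hx.1, hxF⟩, hx.2⟩, Or.inl hxF]
    _ < δ / 2 + δ / 2 := ENNReal.add_lt_add hFδ hsFK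
    _ = δ := ENNReal.add_halves δ

end Lusin

theorem IsCompact.exists_continuous_hasCompactSupport_eqOn_norm_le {X E : Type*}
    [TopologicalSpace X] [T2Space X] [LocallyCompactSpace X] [NormalSpace X]
    [NormedAddCommGroup E] [NormedSpace ℝ E] [FiniteDimensional ℝ E]
    {K U : Set X} (hK : IsCompact K) (hU : IsOpen U) (hKU : K ⊆ U) {f : X → E}
    (hf : ContinuousOn f K) {L : ℝ} (hL : 0 < L) (hfL : ∀ x ∈ K, ‖f x‖ ≤ L) :
    ∃ h : X → E, Continuous h ∧ HasCompactSupport h ∧ tsupport h ⊆ U ∧ EqOn h f K ∧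
      ∀ x, ‖h x‖ ≤ L := by
  have := Metric.instTietzeExtensionClosedBall ℝ (0 : E) hL
  obtain ⟨g, hgL, hgf⟩ := ContinuousMap.exists_forall_mem_restrict_eq hK.isClosed
    ⟨K.domRestrict f, hf.domRestrict⟩ (t := Metric.closedBall 0 L)
    fun x ↦ mem_closedBall_zero_iff.2 (hfL x x.2)
  obtain ⟨φ, hφK, hφc, hφU, hφ01⟩ := exists_continuousMap_one_of_isCompact_subset_isOpen hK hU hKU
  refine ⟨fun x ↦ φ x • g x, by fun_prop, HasCompactSupport.smul_right (f := φ) hφc,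
    (tsupport_smul_subset_left _ _).trans hφU, fun x hx ↦ ?_, fun x ↦ ?_⟩
  · simpa [hφK hx] using congr($hgf ⟨x, hx⟩)
  · calc ‖φ x • g x‖ = |φ x| * ‖g x‖ := norm_smul _ _
      _ ≤ 1 * L := by
        gcongr
        · exact abs_le.2 ⟨by linarith [(hφ01 x).1], (hφ01 x).2⟩
        · exact mem_closedBall_zero_iff.1 (hgL x)
      _ = L := one_mul L

section

variable {α E : Type*} [MeasurableSpace α] {μ : Measure α} [NormedAddCommGroup E] {f h : α → E}
  {K U : Set α}

theorem measure_le_enorm_ne_zero_of_lt_eLpNormEssSup {c : ℝ≥0∞}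
    (hc : c < eLpNormEssSup f μ) : μ {x | c ≤ ‖f x‖ₑ} ≠ 0 := by
  intro hμ
  refine hc.not_ge (eLpNormEssSup_le_of_ae_enorm_bound ?_)
  exact measure_eq_zero_iff_ae_notMem.1 hμ |>.mono fun x hx ↦ (not_le.1 hx).le

theorem lintegral_enorm_rpow_le_add_of_eqOn (hK : MeasurableSet K) (hU : MeasurableSet U)
    (hhf : EqOn h f K) (hhU : Function.support h ⊆ U) {L : ℝ≥0∞} (hhL : ∀ x, ‖h x‖ₑ ≤ L)
    {q : ℝ} (hq : 0 < q) :
    ∫⁻ x, ‖h x‖ₑ ^ q ∂μ ≤ ∫⁻ x, ‖f x‖ₑ ^ q ∂μ + L ^ q * μ (U \ K) := by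
  rw [← lintegral_indicator_const (hU.diff hK), ← lintegral_add_right _
    (measurable_const.indicator (hU.diff hK))]
  refine lintegral_mono fun x ↦ ?_
  by_cases hxK : x ∈ K
  · rw [hhf hxK]
    exact le_self_add
  by_cases hxU : x ∈ U
  · rw [indicator_of_mem (show x ∈ U \ K from ⟨hxU, hxK⟩)]
    exact le_add_left (ENNReal.rpow_le_rpow (hhL x) hq.le)
  · rw [Function.notMem_support.1 fun hx ↦ hxU (hhU hx), enorm_zero, ENNReal.zero_rpow_of_pos hq]
    exact zero_le

theorem eLpNorm_le_one_add_mul_of_eqOn (hf : AEStronglyMeasurable f μ) (hK : MeasurableSet K)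
    (hU : MeasurableSet U) (hhf : EqOn h f K) (hhU : Function.support h ⊆ U) {c e : ℝ≥0∞}
    (hc : c ≤ eLpNormEssSup f μ) (hhc : ∀ x, ‖h x‖ₑ ≤ (1 + e) * c)
    (hUK : (1 + e) * μ (U \ K) ≤ e * μ {x | c ≤ ‖f x‖ₑ}) {p : ℝ≥0∞} (hp : 1 ≤ p) :
    eLpNorm h p μ ≤ (1 + e) * eLpNorm f p μ := by
  rcases eq_or_ne p ∞ with rfl | hp_top
  · simp only [eLpNorm_exponent_top]
    exact eLpNormEssSup_le_of_ae_enorm_bound (ae_of_all _ fun x ↦ (hhc x).trans (by gcongr))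
  have hp0 : p ≠ 0 := (zero_lt_one.trans_le hp).ne'
  lift p to NNReal using hp_top
  have hq : 1 ≤ (p : ℝ) := by exact_mod_cast (ENNReal.one_le_coe_iff.1 hp)
  rw [← ENNReal.rpow_le_rpow_iff (zero_lt_one.trans_le hq),
    ENNReal.mul_rpow_of_nonneg _ _ (zero_le_one.trans hq), eLpNorm_nnreal_pow_eq_lintegral
      (by exact_mod_cast hp0), eLpNorm_nnreal_pow_eq_lintegral (by exact_mod_cast hp0)]
  calc ∫⁻ x, ‖h x‖ₑ ^ (p : ℝ) ∂μ
      ≤ ∫⁻ x, ‖f x‖ₑ ^ (p : ℝ) ∂μ + ((1 + e) * c) ^ (p : ℝ) * μ (U \ K) :=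
        lintegral_enorm_rpow_le_add_of_eqOn hK hU hhf hhU hhc (zero_lt_one.trans_le hq)
    _ ≤ (1 + e) ^ (p : ℝ) * ∫⁻ x, ‖f x‖ₑ ^ (p : ℝ) ∂μ := by
        refine ENNReal.add_rpow_mul_le hq ?_ hUK
        rw [← eLpNorm_nnreal_pow_eq_lintegral (by exact_mod_cast hp0)]
        exact mul_meas_ge_le_pow_eLpNorm' μ hp0 coe_ne_top hf c

variable [MeasurableSpace E] [OpensMeasurableSpace E] [IsFiniteMeasure μ]

variable (μ) in
theorem Measurable.exists_measure_lt_norm_lt (hf : Measurable f) {δ : ℝ≥0∞} (hδ : δ ≠ 0) :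
    ∃ C : ℝ, μ {x | C < ‖f x‖} < δ := by
  have hlim : Tendsto (fun n : ℕ ↦ μ {x | (n : ℝ) < ‖f x‖}) atTop (𝓝 0) := by
    have hempty : (⋂ n : ℕ, {x | (n : ℝ) < ‖f x‖}) = ∅ :=
      iInter_eq_empty_iff.2 fun x ↦ (exists_nat_ge ‖f x‖).imp fun n hn ↦ hn.not_gt
    simpa [Function.comp_def, hempty] using tendsto_measure_iInter_atTop (μ := μ)
      (s := fun n : ℕ ↦ {x | (n : ℝ) < ‖f x‖})
      (fun n ↦ (measurableSet_lt measurable_const hf.norm).nullMeasurableSet)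
      (fun m n hmn x hx ↦ show (m : ℝ) < ‖f x‖ from (Nat.cast_le.2 hmn).trans_lt hx)
      ⟨0, measure_ne_top μ _⟩
  obtain ⟨n, hn⟩ := (hlim.eventually (gt_mem_nhds (pos_iff_ne_zero.2 hδ))).exists
  exact ⟨n, hn⟩

theorem exists_pos_ofReal_lt_eLpNormEssSup_and_measure_lt (hf : Measurable f)
    (hf0 : eLpNormEssSup f μ ≠ 0) {t : ℝ} (ht : 1 < t) {δ : ℝ≥0∞} (hδ : δ ≠ 0) :
    ∃ c : ℝ, 0 < c ∧ ENNReal.ofReal c < eLpNormEssSup f μ ∧ μ {x | t * c < ‖f x‖} < δ := by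
  rcases eq_or_ne (eLpNormEssSup f μ) ∞ with hM | hM
  · obtain ⟨C, hC⟩ := hf.exists_measure_lt_norm_lt μ hδ
    refine ⟨max C 1, by positivity, hM ▸ ofReal_lt_top, (measure_mono fun x hx ↦ ?_).trans_lt hC⟩
    have : C ≤ t * max C 1 := (le_max_left C 1).trans (le_mul_of_one_le_left (by positivity) ht.le)
    exact this.trans_lt hx
  · have hM0 : 0 < (eLpNormEssSup f μ).toReal := toReal_pos hf0 hM
    refine ⟨(eLpNormEssSup f μ).toReal / t, by positivity, ?_, ?_⟩
    · rw [ofReal_lt_iff_lt_toReal (by positivity) hM]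
      exact div_lt_self hM0 ht
    · refine (measure_mono_null (fun x hx ↦ ?_) (meas_eLpNormEssSup_lt (f := f))).trans_lt
        (pos_iff_ne_zero.2 hδ)
      rw [mem_ofPred_eq, mul_div_cancel₀ _ (by positivity : t ≠ 0)] at hx
      exact ((lt_ofReal_iff_toReal_lt hM).2 hx).trans_eq (ofReal_norm _)

variable (μ) in
theorem Measurable.exists_isCompact_subset_continuousOn_norm_le [TopologicalSpace α]
    [OpensMeasurableSpace α] [T2Space α] [SecondCountableTopology E] [μ.WeaklyRegular]
    [μ.InnerRegularCompactLTTop] (hf : Measurable f) {s : Set α} (hs : MeasurableSet s) (L : ℝ)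
    {δ : ℝ≥0∞} (hδ : δ ≠ 0) :
    ∃ K ⊆ s, IsCompact K ∧ ContinuousOn f K ∧ (∀ x ∈ K, ‖f x‖ ≤ L) ∧
      μ (s \ K) < μ {x | L < ‖f x‖} + δ := by
  obtain ⟨K, hKs, hK, hfK, hsK⟩ := hf.exists_isCompact_subset_continuousOn_measure_sdiff_lt μ
    (hs.inter (measurableSet_le hf.norm measurable_const)) hδ
  refine ⟨K, hKs.trans inter_subset_left, hK, hfK, fun x hx ↦ (hKs hx).2, ?_⟩
  calc μ (s \ K) ≤ μ {x | L < ‖f x‖} + μ ((s ∩ {x | ‖f x‖ ≤ L}) \ K) := by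
        refine (measure_mono fun x (hx : x ∈ s \ K) ↦ ?_).trans (measure_union_le _ _)
        by_cases hfx : ‖f x‖ ≤ L
        exacts [Or.inr ⟨⟨hx.1, hfx⟩, hx.2⟩, Or.inl (not_le.1 hfx)]
    _ < μ {x | L < ‖f x‖} + δ := ENNReal.add_lt_add_left (measure_ne_top μ _) hsK

end

theorem Measurable.exists_hasCompactSupport_measure_ne_lt_eLpNorm_le {X E : Type*}
    [TopologicalSpace X] [T2Space X] [LocallyCompactSpace X] [NormalSpace X] [MeasurableSpace X]
    [OpensMeasurableSpace X] [NormedAddCommGroup E] [NormedSpace ℝ E] [FiniteDimensional ℝ E]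
    [MeasurableSpace E] [OpensMeasurableSpace E] (μ : Measure X) [IsFiniteMeasure μ]
    [μ.WeaklyRegular] [μ.InnerRegularCompactLTTop] {Ω : Set X} (hΩ : IsOpen Ω) {f : X → E}
    (hf : Measurable f) {ε : ℝ} (hε : 0 < ε) :
    ∃ h : X → E, Continuous h ∧ HasCompactSupport h ∧ tsupport h ⊆ Ω ∧
      μ {x ∈ Ω | h x ≠ f x} < ENNReal.ofReal ε ∧
      ∀ p : ℝ≥0∞, 1 ≤ p → eLpNorm h p μ ≤ (1 + ENNReal.ofReal ε) * eLpNorm f p μ := by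
  rcases eq_or_ne (eLpNormEssSup f μ) 0 with hf0 | hf0
  · refine ⟨0, continuous_const, .zero, by simp, ?_, fun p _ ↦ by simp⟩
    exact (measure_mono_null (fun x hx ↦ Ne.symm hx.2) (eLpNormEssSup_eq_zero_iff.1 hf0)).trans_lt
      (ofReal_pos.2 hε)
  have hε2 : ENNReal.ofReal ε / 2 ≠ 0 := (ENNReal.half_pos (ofReal_pos.2 hε).ne').ne'
  have hε1 : 1 + ENNReal.ofReal ε ≠ ∞ := add_ne_top.2 ⟨one_ne_top, ofReal_ne_top⟩
  obtain ⟨c, hc, hcf, hfc⟩ :=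
    exists_pos_ofReal_lt_eLpNormEssSup_and_measure_lt hf hf0 (lt_add_of_pos_right 1 hε) hε2
  obtain ⟨K, hKΩ, hK, hfK, hfKc, hΩK⟩ :=
    hf.exists_isCompact_subset_continuousOn_norm_le μ hΩ.measurableSet ((1 + ε) * c) hε2
  have hη : ENNReal.ofReal ε * μ {x | ENNReal.ofReal c ≤ ‖f x‖ₑ} / (1 + ENNReal.ofReal ε) ≠ 0 :=
    (ENNReal.div_pos_iff.2 ⟨mul_ne_zero (ofReal_pos.2 hε).ne'
      (measure_le_enorm_ne_zero_of_lt_eLpNormEssSup hcf), hε1⟩).ne'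
  obtain ⟨U, hKU, hU, -, hUK⟩ := hK.measurableSet.exists_isOpen_sdiff_lt (measure_ne_top μ K) hη
  obtain ⟨h, hh, hhc, hhU, hhf, hhL⟩ := hK.exists_continuous_hasCompactSupport_eqOn_norm_le
    (hU.inter hΩ) (subset_inter hKU hKΩ) hfK (by positivity) hfKc
  refine ⟨h, hh, hhc, hhU.trans inter_subset_right, ?_, fun p hp ↦ ?_⟩
  · calc μ {x ∈ Ω | h x ≠ f x} ≤ μ (Ω \ K) :=
          measure_mono fun x hx ↦ ⟨hx.1, fun hxK ↦ hx.2 (hhf hxK)⟩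
      _ < μ {x | (1 + ε) * c < ‖f x‖} + ENNReal.ofReal ε / 2 := hΩK
      _ ≤ ENNReal.ofReal ε / 2 + ENNReal.ofReal ε / 2 := by gcongr
      _ = ENNReal.ofReal ε := ENNReal.add_halves _
  refine eLpNorm_le_one_add_mul_of_eqOn hf.aestronglyMeasurable hK.measurableSet hU.measurableSet
    hhf ((subset_tsupport h).trans (hhU.trans inter_subset_left)) hcf.le (fun x ↦ ?_) ?_ hp
  · rw [← ofReal_norm, ← ofReal_one, ← ofReal_add zero_le_one hε.le, ← ofReal_mul (by positivity)]
    exact ofReal_le_ofReal (hhL x)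
  · rw [mul_comm]
    exact (ENNReal.le_div_iff_mul_le (Or.inl (by positivity)) (Or.inl hε1)).1 hUK.le

/-- Quantitative Lusin theorem (Lemma 3.3 of the paper). -/
theorem quantitative_lusin {n : ℕ} (μ : Measure (EuclideanSpace ℝ (Fin n)))
    (Ω : Set (EuclideanSpace ℝ (Fin n))) (hΩ : IsOpen Ω) (hμΩ : μ Ω < ⊤)
    (f : EuclideanSpace ℝ (Fin n) → EuclideanSpace ℝ (Fin n)) (hf : Measurable f)
    (ε : ℝ) (hε : 0 < ε) :
    ∃ h : EuclideanSpace ℝ (Fin n) → EuclideanSpace ℝ (Fin n),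
      Continuous h ∧ HasCompactSupport h ∧ tsupport h ⊆ Ω ∧
      μ {x ∈ Ω | h x ≠ f x} < ENNReal.ofReal ε ∧
      ∀ p : ℝ≥0∞, 1 ≤ p →
        eLpNorm h p (μ.restrict Ω) ≤ (1 + ENNReal.ofReal ε) * eLpNorm f p (μ.restrict Ω) := by
  have : IsFiniteMeasure (μ.restrict Ω) := isFiniteMeasure_restrict.2 hμΩ.ne
  obtain ⟨h, hh, hhc, hhΩ, hhf, hhp⟩ :=
    hf.exists_hasCompactSupport_measure_ne_lt_eLpNorm_le (μ.restrict Ω) hΩ hε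
  refine ⟨h, hh, hhc, hhΩ, ?_, hhp⟩
  rwa [Measure.restrict_apply' hΩ.measurableSet, inter_eq_left.2 (sep_subset _ _)] at hhf
end

section
/- Let f ∈ L^p₀(μ) for some p₀ ∈ [1,∞] with μ a finite measure on Ω, and suppose for every η > 0 there exists t > 0 with 0 < μ({|f| ≥ t}) < η. Then for every ε > 0 there exists a compactly supported continuous h : Ω → ℝⁿ with μ({h ≠ f}) < ε and ‖h‖_{L^p(μ)} ≤ ‖f‖_{L^p(μ)} for all p ∈ [1, ∞]. -/
/-!
Pick `t` with `0 < μ E < ε / 2`, where `E = {x ∈ Ω | t ≤ ‖f x‖}`. On `A = {x ∈ Ω | ‖f x‖ < t}`,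
Lusin's theorem gives a compact `K` with `μ (A \ K) < ε / 2` on which `f` is continuous. A Tietze
extension of `f|K` into the closed ball of radius `t`, multiplied by an Urysohn cutoff supported
in an open `V ⊇ K` with `μ (V \ K) < μ E`, is the function `h`. It agrees with `f` off
`(A \ K) ∪ E` and `‖h‖ ≤ t`, so `∫ ‖h‖ᵖ ≤ ∫_K ‖f‖ᵖ + tᵖ μ (V \ K) ≤ ∫_K ‖f‖ᵖ + ∫_E ‖f‖ᵖ`;
for `p = ∞`, `‖h‖_∞ ≤ t ≤ ‖f‖_∞` because `μ E > 0`.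
-/

open MeasureTheory Set ENNReal Filter Topology

section Lusin

variable {X E : Type*} [TopologicalSpace X] [NormalSpace X] [MeasurableSpace X] [BorelSpace X]
  [NormedAddCommGroup E] [NormedSpace ℝ E] {μ : Measure X} [μ.WeaklyRegular] {f : X → E}

theorem MeasureTheory.Integrable.exists_seq_continuous_tendsto_ae (hf : Integrable f μ) :
    ∃ g : ℕ → X → E, (∀ k, Continuous (g k)) ∧
      ∀ᵐ x ∂μ, Tendsto (fun k => g k x) atTop (𝓝 (f x)) := by
  choose g hg hgm using fun k : ℕ =>
    (memLp_one_iff_integrable.2 hf).exists_boundedContinuous_eLpNorm_sub_le one_ne_top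
      (ENNReal.inv_ne_zero.2 (natCast_ne_top k))
  have hlim : Tendsto (fun k => eLpNorm (⇑(g k) - f) 1 μ) atTop (𝓝 0) :=
    tendsto_of_tendsto_of_tendsto_of_le_of_le tendsto_const_nhds
      ENNReal.tendsto_inv_nat_nhds_zero (fun _ => zero_le)
      fun k => (eLpNorm_sub_comm _ _ _ _).trans_le (hg k)
  obtain ⟨ns, -, hns⟩ := (tendstoInMeasure_of_tendsto_eLpNorm one_ne_zero
    (fun k => (hgm k).aestronglyMeasurable) hf.aestronglyMeasurable hlim).exists_seq_tendsto_ae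
  exact ⟨fun k => g (ns k), fun k => (g (ns k)).continuous, hns⟩

variable [MeasurableSpace E] [BorelSpace E] [SecondCountableTopology E] [IsFiniteMeasure μ]

theorem Measurable.exists_measure_le_continuousOn_compl (hfm : Measurable f) {δ : ℝ}
    (hδ : 0 < δ) : ∃ T, MeasurableSet T ∧ μ T ≤ ENNReal.ofReal δ ∧ ContinuousOn f Tᶜ := by
  -- `ι` embeds `E` into its unit ball: `ι ∘ f` is integrable, and its continuity is that of `f`.
  set ι : E → E := Subtype.val ∘ Homeomorph.unitBall
  have hι : IsEmbedding ι := IsEmbedding.subtypeVal.comp Homeomorph.unitBall.isEmbedding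
  have hιf : Measurable (ι ∘ f) := hι.continuous.measurable.comp hfm
  have hιf_int : Integrable (ι ∘ f) μ := Integrable.of_bound hιf.aestronglyMeasurable 1
    (ae_of_all _ fun x => (mem_ball_zero_iff.1 (Homeomorph.unitBall (f x)).2).le)
  obtain ⟨g, hg, hgf⟩ := hιf_int.exists_seq_continuous_tendsto_ae
  obtain ⟨T, hT, hTδ, hunif⟩ := tendstoUniformlyOn_of_ae_tendsto'
    (fun k => (hg k).stronglyMeasurable) hιf.stronglyMeasurable hgf hδ
  exact ⟨T, hT, hTδ, hι.isInducing.continuousOn_iff.2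
    (hunif.continuousOn (Frequently.of_forall fun k => (hg k).continuousOn))⟩

theorem Measurable.exists_isCompact_measure_sdiff_lt_continuousOn
    [T2Space X] [μ.InnerRegularCompactLTTop] (hfm : Measurable f) {A : Set X}
    (hA : MeasurableSet A) {δ : ℝ≥0∞} (hδ : δ ≠ 0) :
    ∃ K ⊆ A, IsCompact K ∧ μ (A \ K) < δ ∧ ContinuousOn f K := by
  have hδ2 : 0 < δ / 2 := ENNReal.half_pos hδ
  obtain ⟨r, -, hr0, hrδ⟩ := ENNReal.lt_iff_exists_real_btwn.1 hδ2
  obtain ⟨T, hT, hTr, hfT⟩ :=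
    hfm.exists_measure_le_continuousOn_compl (μ := μ) (ENNReal.ofReal_pos.1 hr0)
  obtain ⟨K, hKA, hK, hAK⟩ :=
    (hA.diff hT).exists_isCompact_sdiff_lt (measure_ne_top μ _) hδ2.ne'
  refine ⟨K, hKA.trans sdiff_subset, hK, ?_, hfT.mono fun x hx => (hKA hx).2⟩
  calc μ (A \ K) ≤ μ ((A \ T) \ K ∪ T) := measure_mono fun x ⟨hxA, hxK⟩ =>
        (em (x ∈ T)).elim Or.inr fun hxT => Or.inl ⟨⟨hxA, hxT⟩, hxK⟩
    _ ≤ μ ((A \ T) \ K) + μ T := measure_union_le _ _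
    _ < δ / 2 + δ / 2 := ENNReal.add_lt_add hAK (hTr.trans_lt hrδ)
    _ = δ := ENNReal.add_halves δ

end Lusin

theorem IsCompact.exists_hasCompactSupport_eqOn_norm_le {X E : Type*} [TopologicalSpace X]
    [T2Space X] [NormalSpace X] [LocallyCompactSpace X] [NormedAddCommGroup E] [NormedSpace ℝ E]
    [FiniteDimensional ℝ E] {K U : Set X} (hK : IsCompact K) (hU : IsOpen U) (hKU : K ⊆ U)
    {f : X → E} (hf : ContinuousOn f K) {t : ℝ} (ht : 0 < t) (hft : ∀ x ∈ K, ‖f x‖ ≤ t) :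
    ∃ h : X → E, Continuous h ∧ HasCompactSupport h ∧ tsupport h ⊆ U ∧ EqOn h f K ∧
      ∀ x, ‖h x‖ ≤ t := by
  have := Metric.instTietzeExtensionClosedBall ℝ (0 : E) ht
  obtain ⟨g, hgt, hgf⟩ := ContinuousMap.exists_forall_mem_restrict_eq hK.isClosed
    ⟨K.domRestrict f, hf.domRestrict⟩ (t := Metric.closedBall 0 t)
    fun x => mem_closedBall_zero_iff.2 (hft x x.2)
  obtain ⟨φ, hφK, hφc, hφU, hφ01⟩ :=
    exists_continuousMap_one_of_isCompact_subset_isOpen hK hU hKU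
  refine ⟨fun x => φ x • g x, by fun_prop, HasCompactSupport.smul_right hφc,
    (tsupport_smul_subset_left _ _).trans hφU, fun x hx => ?_, fun x => ?_⟩
  · simp [hφK hx, show g x = f x from congr($hgf ⟨x, hx⟩)]
  · rw [norm_smul, Real.norm_of_nonneg (hφ01 x).1]
    exact (mul_le_of_le_one_left (norm_nonneg _) (hφ01 x).2).trans
      (mem_closedBall_zero_iff.1 (hgt x))

section NormComparison

variable {X : Type*} [MeasurableSpace X] {ν : Measure X} {K V E : Set X}

theorem lintegral_le_lintegral_of_eqOn_of_le_indicator {F G : X → ℝ≥0∞} {c : ℝ≥0∞}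
    (hK : MeasurableSet K) (hV : MeasurableSet V) (hE : MeasurableSet E) (hKE : Disjoint K E)
    (hVKE : ν (V \ K) ≤ ν E) (hFG : EqOn F G K)
    (hFc : ∀ x ∉ K, F x ≤ (V \ K).indicator (fun _ => c) x) (hcG : ∀ x ∈ E, c ≤ G x) :
    ∫⁻ x, F x ∂ν ≤ ∫⁻ x, G x ∂ν := by
  have hcompl : ∫⁻ x in Kᶜ, F x ∂ν ≤ ∫⁻ x in E, G x ∂ν :=
    calc ∫⁻ x in Kᶜ, F x ∂ν ≤ ∫⁻ x in Kᶜ, (V \ K).indicator (fun _ => c) x ∂ν :=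
          setLIntegral_mono' hK.compl hFc
      _ ≤ ∫⁻ x, (V \ K).indicator (fun _ => c) x ∂ν := setLIntegral_le_lintegral _ _
      _ = c * ν (V \ K) := lintegral_indicator_const (hV.diff hK) c
      _ ≤ c * ν E := by gcongr
      _ = ∫⁻ _ in E, c ∂ν := (setLIntegral_const E c).symm
      _ ≤ ∫⁻ x in E, G x ∂ν := setLIntegral_mono' hE hcG
  calc ∫⁻ x, F x ∂ν = ∫⁻ x in K, F x ∂ν + ∫⁻ x in Kᶜ, F x ∂ν :=
        (lintegral_add_compl _ hK).symm
    _ ≤ ∫⁻ x in K, G x ∂ν + ∫⁻ x in E, G x ∂ν :=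
        add_le_add (setLIntegral_congr_fun hK hFG).le hcompl
    _ = ∫⁻ x in K ∪ E, G x ∂ν := (lintegral_union hE hKE).symm
    _ ≤ ∫⁻ x, G x ∂ν := setLIntegral_le_lintegral _ _

variable {F : Type*} [NormedAddCommGroup F] {h f : X → F} {t : ℝ}

theorem ofReal_le_eLpNormEssSup_of_measure_ne_zero (hE0 : ν E ≠ 0)
    (hft : ∀ x ∈ E, t ≤ ‖f x‖) : ENNReal.ofReal t ≤ eLpNormEssSup f ν := by
  by_contra! hlt
  refine hE0 (measure_mono_null (fun x hx => ?_) (ae_iff.1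
    ((enorm_ae_le_eLpNormEssSup f ν).mono fun x hx => hx.trans_lt hlt)))
  simpa [← ofReal_norm] using ENNReal.ofReal_le_ofReal (hft x hx)

theorem eLpNorm_le_eLpNorm_of_eqOn (hK : MeasurableSet K) (hV : MeasurableSet V)
    (hE : MeasurableSet E) (hKE : Disjoint K E) (hVKE : ν (V \ K) ≤ ν E) (hE0 : ν E ≠ 0)
    (hhf : EqOn h f K) (hht : ∀ x, ‖h x‖ ≤ t) (hhV : ∀ x ∉ V, h x = 0)
    (hft : ∀ x ∈ E, t ≤ ‖f x‖) (p : ℝ≥0∞) :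
    eLpNorm h p ν ≤ eLpNorm f p ν := by
  rcases eq_or_ne p 0 with rfl | hp0
  · simp
  rcases eq_or_ne p ∞ with rfl | hp
  · rw [eLpNorm_exponent_top, eLpNorm_exponent_top]
    exact (eLpNormEssSup_le_of_ae_bound (ae_of_all _ hht)).trans
      (ofReal_le_eLpNormEssSup_of_measure_ne_zero hE0 hft)
  have hq : 0 < p.toReal := ENNReal.toReal_pos hp0 hp
  rw [eLpNorm_eq_lintegral_rpow_enorm_toReal hp0 hp,
    eLpNorm_eq_lintegral_rpow_enorm_toReal hp0 hp]
  gcongr 1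
  refine lintegral_le_lintegral_of_eqOn_of_le_indicator (c := ENNReal.ofReal t ^ p.toReal)
    hK hV hE hKE hVKE (fun x hx => by simp only [hhf hx]) (fun x hxK => ?_) fun x hx => ?_
  · by_cases hxV : x ∈ V
    · rw [indicator_of_mem (show x ∈ V \ K from ⟨hxV, hxK⟩), ← ofReal_norm]
      gcongr
      exact hht x
    · simp [hhV x hxV, hq]
  · rw [← ofReal_norm]
    gcongr
    exact hft x hx

end NormComparison

theorem measure_setOf_ne_le_of_eqOn {X F : Type*} [MeasurableSpace X] [NormedAddCommGroup F]
    {μ : Measure X} {Ω K : Set X} {h f : X → F} {t : ℝ} (hhf : EqOn h f K) :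
    μ {x ∈ Ω | h x ≠ f x} ≤ μ ({x ∈ Ω | ‖f x‖ < t} \ K) + μ {x ∈ Ω | t ≤ ‖f x‖} := by
  refine (measure_mono fun x (hx : x ∈ Ω ∧ h x ≠ f x) => ?_).trans (measure_union_le _ _)
  rcases lt_or_ge ‖f x‖ t with hlt | hge
  · exact Or.inl ⟨⟨hx.1, hlt⟩, fun hxK => hx.2 (hhf hxK)⟩
  · exact Or.inr ⟨hx.1, hge⟩

theorem quantitative_lusin_refined_general {n : ℕ} (μ : Measure (EuclideanSpace ℝ (Fin n)))
    (Ω : Set (EuclideanSpace ℝ (Fin n))) (hΩ : IsOpen Ω) (hμΩ : μ Ω < ⊤)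
    (f : EuclideanSpace ℝ (Fin n) → EuclideanSpace ℝ (Fin n)) (hf : Measurable f)
    (hsmall : ∀ η : ℝ≥0∞, 0 < η → ∃ t : ℝ, 0 < t ∧
      0 < μ {x ∈ Ω | t ≤ ‖f x‖} ∧ μ {x ∈ Ω | t ≤ ‖f x‖} < η)
    (ε : ℝ) (hε : 0 < ε) :
    ∃ h : EuclideanSpace ℝ (Fin n) → EuclideanSpace ℝ (Fin n),
      Continuous h ∧ HasCompactSupport h ∧ tsupport h ⊆ Ω ∧
      μ {x ∈ Ω | h x ≠ f x} < ENNReal.ofReal ε ∧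
      ∀ p : ℝ≥0∞, 1 ≤ p →
        eLpNorm h p (μ.restrict Ω) ≤ eLpNorm f p (μ.restrict Ω) := by
  have : IsFiniteMeasure (μ.restrict Ω) := isFiniteMeasure_restrict.2 hμΩ.ne
  have hε2 : 0 < ENNReal.ofReal ε / 2 := ENNReal.half_pos (ENNReal.ofReal_pos.2 hε).ne'
  obtain ⟨t, ht, hE0, hEε⟩ := hsmall _ hε2
  set E := {x ∈ Ω | t ≤ ‖f x‖}
  set A := {x ∈ Ω | ‖f x‖ < t}
  have hE : MeasurableSet E := hΩ.measurableSet.inter (measurableSet_le measurable_const hf.norm)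
  have hA : MeasurableSet A := hΩ.measurableSet.inter (measurableSet_lt hf.norm measurable_const)
  have hμE : μ.restrict Ω E = μ E := Measure.restrict_eq_self _ fun x hx => hx.1
  obtain ⟨K, hKA, hK, hAK, hfK⟩ :=
    hf.exists_isCompact_measure_sdiff_lt_continuousOn (μ := μ.restrict Ω) hA hε2.ne'
  have hμAK : μ.restrict Ω (A \ K) = μ (A \ K) :=
    Measure.restrict_eq_self _ (sdiff_subset.trans fun x hx => hx.1)
  obtain ⟨V, hKV, hV, -, hVK⟩ :=
    hK.measurableSet.exists_isOpen_sdiff_lt (measure_ne_top (μ.restrict Ω) K) (hμE ▸ hE0.ne')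
  obtain ⟨h, hc, hcs, hhΩ, hhf, hht⟩ := hK.exists_hasCompactSupport_eqOn_norm_le (hV.inter hΩ)
    (subset_inter hKV fun x hx => (hKA hx).1) hfK ht fun x hx => (hKA hx).2.le
  refine ⟨h, hc, hcs, hhΩ.trans inter_subset_right, ?_, fun p _ => ?_⟩
  · calc μ {x ∈ Ω | h x ≠ f x} ≤ μ (A \ K) + μ E := measure_setOf_ne_le_of_eqOn hhf
      _ < ENNReal.ofReal ε / 2 + ENNReal.ofReal ε / 2 :=
          ENNReal.add_lt_add (hμAK ▸ hAK) hEε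
      _ = ENNReal.ofReal ε := ENNReal.add_halves _
  · exact eLpNorm_le_eLpNorm_of_eqOn hK.measurableSet hV.measurableSet hE
      (disjoint_left.2 fun x hxK hxE => (hKA hxK).2.not_ge hxE.2) hVK.le (hμE ▸ hE0.ne') hhf
      hht (fun x hx => image_eq_zero_of_notMem_tsupport fun hxh => hx (hhΩ hxh).1)
      (fun x hx => hx.2) p

/-- Refined quantitative Lusin theorem (Remark 3.4 of the paper). -/
theorem quantitative_lusin_refined {n : ℕ} (μ : Measure (EuclideanSpace ℝ (Fin n)))
    (Ω : Set (EuclideanSpace ℝ (Fin n))) (hΩ : IsOpen Ω) (hμΩ : μ Ω < ⊤)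
    (f : EuclideanSpace ℝ (Fin n) → EuclideanSpace ℝ (Fin n)) (hf : Measurable f)
    (hLp : ∃ p₀ : ℝ≥0∞, 1 ≤ p₀ ∧ MemLp f p₀ (μ.restrict Ω))
    (hsmall : ∀ η : ℝ≥0∞, 0 < η → ∃ t : ℝ, 0 < t ∧
      0 < μ {x ∈ Ω | t ≤ ‖f x‖} ∧ μ {x ∈ Ω | t ≤ ‖f x‖} < η)
    (ε : ℝ) (hε : 0 < ε) :
    ∃ h : EuclideanSpace ℝ (Fin n) → EuclideanSpace ℝ (Fin n),
      Continuous h ∧ HasCompactSupport h ∧ tsupport h ⊆ Ω ∧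
      μ {x ∈ Ω | h x ≠ f x} < ENNReal.ofReal ε ∧
      ∀ p : ℝ≥0∞, 1 ≤ p →
        eLpNorm h p (μ.restrict Ω) ≤ eLpNorm f p (μ.restrict Ω) :=
  quantitative_lusin_refined_general μ Ω hΩ hμΩ f hf hsmall ε hε
end

section
/- With the layer decomposition h = Σ_{i=1}^N h_i as above (each |h_i| ≤ η = ‖h‖_∞/N), suppose g_i are C¹ functions with supp g_i ⊆ supp h_i and ‖Dg_i‖_∞ ≤ (1 + ε/(2N))·η with ε < 1. Then the function g = Σ_{i=1}^N g_i satisfies |Dg(x)| ≤ |h(x)| + 2η for every x ∈ Ω. -/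
/-!
At a point `x`, only the layers whose support contains `x` contribute to `Dg(x)`, each by at
most `(1 + ε/(2N)) η`. If `m` is the largest such layer index, there are at most `m` of them,
while `x ∈ supp h_m` gives `|h(x)| ≥ (m - 1) η`. Since `m ≤ N` and `ε < 1`, the excess
`m · ε/(2N) · η` is at most `η / 2`, so `|Dg(x)| ≤ m η + η / 2 ≤ |h(x)| + 2η`.
-/

section Gradient

variable {𝕜 F : Type*} [RCLike 𝕜] [NormedAddCommGroup F] [InnerProductSpace 𝕜 F]
  [CompleteSpace F]

theorem gradient_of_notMem_tsupport {f : F → 𝕜} {x : F} (hx : x ∉ tsupport f) :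
    gradient f x = 0 := by
  rw [gradient, fderiv_of_notMem_tsupport 𝕜 hx, map_zero]

theorem gradient_fun_sum {ι : Type*} {s : Finset ι} {f : ι → F → 𝕜} {x : F}
    (hf : ∀ i ∈ s, DifferentiableAt 𝕜 (f i) x) :
    gradient (fun y => ∑ i ∈ s, f i y) x = ∑ i ∈ s, gradient (f i) x := by
  simp only [gradient, fderiv_fun_sum hf, map_sum]

theorem sum_norm_gradient_eq_sum_filter_mem {ι : Type*} {s : Finset ι} {f : ι → F → 𝕜}
    {T : ι → Set F} (hf : ∀ i ∈ s, tsupport (f i) ⊆ T i) (x : F) [DecidablePred (x ∈ T ·)] :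
    ∑ i ∈ s, ‖gradient (f i) x‖ = ∑ i ∈ s with x ∈ T i, ‖gradient (f i) x‖ := by
  refine (Finset.sum_filter_of_ne fun i hi hne => ?_).symm
  by_contra hx
  exact hne (by rw [gradient_of_notMem_tsupport fun hfx => hx (hf i hi hfx), norm_zero])

end Gradient

namespace Finset

theorem card_le_sup_id {s : Finset ℕ} (hs : 0 ∉ s) : s.card ≤ s.sup id := by
  calc s.card ≤ (Icc 1 (s.sup id)).card := by
        refine card_le_card fun i hi => mem_Icc.mpr ⟨?_, le_sup (f := id) hi⟩
        exact Nat.one_le_iff_ne_zero.mpr fun h0 => hs (h0 ▸ hi)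
    _ = s.sup id := by simp

theorem sum_le_sup_id_mul {s : Finset ℕ} (hs : 0 ∉ s) {a : ℕ → ℝ} {b : ℝ} (hb : 0 ≤ b)
    (ha : ∀ i ∈ s, a i ≤ b) : ∑ i ∈ s, a i ≤ (s.sup id : ℕ) * b := by
  calc ∑ i ∈ s, a i ≤ s.card • b := sum_le_card_nsmul s a b ha
    _ = (s.card : ℝ) * b := nsmul_eq_mul _ _
    _ ≤ (s.sup id : ℕ) * b := by gcongr; exact_mod_cast card_le_sup_id hs

theorem sup_id_sub_one_mul_le {s : Finset ℕ} {η t : ℝ} (hη : 0 ≤ η) (ht : 0 ≤ t)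
    (h : ∀ i ∈ s, ((i : ℝ) - 1) * η ≤ t) : ((s.sup id : ℕ) - 1 : ℝ) * η ≤ t := by
  rcases s.eq_empty_or_nonempty with rfl | hs
  · simp only [sup_empty, Nat.bot_eq_zero, Nat.cast_zero]
    nlinarith
  · obtain ⟨m, hm, hsup⟩ := s.exists_mem_eq_sup hs id
    exact hsup ▸ h m hm

end Finset

theorem layer_count_mul_le {m N : ℕ} (hmN : m ≤ N) {ε η t : ℝ} (hε : ε < 1) (hη : 0 ≤ η)
    (hlevel : ((m : ℝ) - 1) * η ≤ t) : (m : ℝ) * ((1 + ε / (2 * N)) * η) ≤ t + 2 * η := by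
  have hmN' : (m : ℝ) ≤ N := by exact_mod_cast hmN
  have hexcess : (m : ℝ) * (ε / (2 * N)) ≤ 1 / 2 := by
    rw [mul_div_assoc']
    exact div_le_of_le_mul₀ (by positivity) (by norm_num) (by nlinarith)
  nlinarith [mul_le_mul_of_nonneg_right hexcess hη]

theorem gradient_sum_layers_bound_general {n : ℕ}
    (h : EuclideanSpace ℝ (Fin n) → EuclideanSpace ℝ (Fin n))
    (N : ℕ) (ε η : ℝ) (hε₀ : 0 < ε) (hε₁ : ε < 1)
    (H : ℕ → EuclideanSpace ℝ (Fin n) → EuclideanSpace ℝ (Fin n))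
    (hHnorm : ∀ i x, ‖H i x‖ ≤ η)
    (hHlevel : ∀ i ∈ Finset.Icc 1 N,
      tsupport (H i) ⊆ {x | ((i : ℝ) - 1) * η ≤ ‖h x‖})
    (g : ℕ → EuclideanSpace ℝ (Fin n) → ℝ)
    (hg : ∀ i, ContDiff ℝ 1 (g i))
    (hgsupp : ∀ i ∈ Finset.Icc 1 N, tsupport (g i) ⊆ tsupport (H i))
    (hgrad : ∀ i ∈ Finset.Icc 1 N, ∀ x, ‖gradient (g i) x‖ ≤ (1 + ε / (2 * N)) * η) :
    ∀ x, ‖gradient (fun y => ∑ i ∈ Finset.Icc 1 N, g i y) x‖ ≤ ‖h x‖ + 2 * η := by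
  intro x
  classical
  have hη : 0 ≤ η := (norm_nonneg _).trans (hHnorm 0 x)
  set S := {i ∈ Finset.Icc 1 N | x ∈ tsupport (H i)}
  have hmem : ∀ i ∈ S, i ∈ Finset.Icc 1 N ∧ x ∈ tsupport (H i) := fun i => Finset.mem_filter.mp
  have hsupN : S.sup id ≤ N := Finset.sup_le fun i hi => (Finset.mem_Icc.mp (hmem i hi).1).2
  calc ‖gradient (fun y => ∑ i ∈ Finset.Icc 1 N, g i y) x‖
      ≤ ∑ i ∈ Finset.Icc 1 N, ‖gradient (g i) x‖ := by
        rw [gradient_fun_sum fun i _ => ((hg i).differentiable one_ne_zero).differentiableAt]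
        exact norm_sum_le _ _
    _ = ∑ i ∈ S, ‖gradient (g i) x‖ := sum_norm_gradient_eq_sum_filter_mem hgsupp x
    _ ≤ (S.sup id : ℕ) * ((1 + ε / (2 * N)) * η) :=
        Finset.sum_le_sup_id_mul (by simp [S]) (by positivity)
          fun i hi => hgrad i (hmem i hi).1 x
    _ ≤ ‖h x‖ + 2 * η :=
        layer_count_mul_le hsupN hε₁ hη <| Finset.sup_id_sub_one_mul_le hη (norm_nonneg _)
          fun i hi => hHlevel i (hmem i hi).1 (hmem i hi).2

/-- Pointwise gradient bound for the sum of the layer approximations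
(estimate (3.27) in the proof of Theorem 3.2). -/
theorem gradient_sum_layers_bound {n : ℕ}
    (Ω : Set (EuclideanSpace ℝ (Fin n))) (hΩ : IsOpen Ω)
    (h : EuclideanSpace ℝ (Fin n) → EuclideanSpace ℝ (Fin n))
    (hbdd : BddAbove (Set.range fun x => ‖h x‖))
    (N : ℕ) (hN : 0 < N) (ε η : ℝ) (hε₀ : 0 < ε) (hε₁ : ε < 1)
    (hη : η = (⨆ x, ‖h x‖) / N)
    (H : ℕ → EuclideanSpace ℝ (Fin n) → EuclideanSpace ℝ (Fin n))
    (hHnorm : ∀ i x, ‖H i x‖ ≤ η)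
    (hHsum : ∀ x, h x = ∑ i ∈ Finset.Icc 1 N, H i x)
    (hHnest : ∀ i, tsupport (H (i + 1)) ⊆ tsupport (H i))
    (hHlevel : ∀ i ∈ Finset.Icc 1 N,
      tsupport (H i) ⊆ {x | ((i : ℝ) - 1) * η ≤ ‖h x‖})
    (g : ℕ → EuclideanSpace ℝ (Fin n) → ℝ)
    (hg : ∀ i, ContDiff ℝ 1 (g i))
    (hgsupp : ∀ i ∈ Finset.Icc 1 N, tsupport (g i) ⊆ tsupport (H i))
    (hgrad : ∀ i ∈ Finset.Icc 1 N, ∀ x, ‖gradient (g i) x‖ ≤ (1 + ε / (2 * N)) * η) :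
    ∀ x, ‖gradient (fun y => ∑ i ∈ Finset.Icc 1 N, g i y) x‖ ≤ ‖h x‖ + 2 * η :=
  gradient_sum_layers_bound_general h N ε η hε₀ hε₁ H hHnorm hHlevel g hg hgsupp hgrad
end
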